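/- Let k ≥ 2 and let G be a forest on a finite vertex type with at least 2k + 2 vertices that has no sibling set of size k. Then every set T of vertices such that G ⊕ T has degeneracy exactly k satisfies |T| ≥ k + 1. -/

import Mathlib

open SimpleGraph

/-- Subgraph complementation: `G ⊕ S` toggles all adjacencies inside `S`. -/
def scomp {V : Type*} (G : SimpleGraph V) (S : Set V) : SimpleGraph V where
  Adj u v := u ≠ v ∧ (((u ∈ S ∧ v ∈ S) ∧ ¬ G.Adj u v) ∨ (¬(u ∈ S ∧ v ∈ S) ∧ G.Adj u v))
  symm := by
    constructor
    intro u v h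
    obtain ⟨hne, h⟩ := h
    refine ⟨hne.symm, ?_⟩
    rcases h with ⟨⟨hu, hv⟩, hnadj⟩ | ⟨hns, hadj⟩
    · exact Or.inl ⟨⟨hv, hu⟩, fun h => hnadj h.symm⟩
    · exact Or.inr ⟨fun h' => hns ⟨h'.2, h'.1⟩, hadj.symm⟩
  loopless := by constructor; intro u h; exact h.1 rfl

/-- `s` is an independent set of `G`. -/
def IsIndep {V : Type*} (G : SimpleGraph V) (s : Set V) : Prop :=
  ∀ ⦃u⦄, u ∈ s → ∀ ⦃v⦄, v ∈ s → ¬ G.Adj u v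

/-- `H` has degeneracy exactly `k`. -/
def DegeneracyExactly {V : Type*} (H : SimpleGraph V) (k : ℕ) : Prop :=
  (∀ X : Set V, X.Nonempty → ∃ v ∈ X, {w | w ∈ X ∧ H.Adj v w}.ncard ≤ k) ∧
  (∃ X : Set V, X.Nonempty ∧ ∀ v ∈ X, k ≤ {w | w ∈ X ∧ H.Adj v w}.ncard)

/-- A sibling set of size `k`: an independent set of `k` vertices with a common neighbor. -/
def SiblingSet {V : Type*} (G : SimpleGraph V) (S : Set V) (k : ℕ) : Prop :=
  S.ncard = k ∧ IsIndep G S ∧ ∃ w : V, ∀ v ∈ S, G.Adj w v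

/-!
If `|T| ≤ k`, take a nonempty `X` on which `G ⊕ T` has minimum degree at least `k`. A vertex of
`X ∩ T` has fewer than `|T| ≤ k` neighbours in `X`, so `X ⊄ T`; a vertex `v ∈ X \ T` keeps its
`G`-neighbourhood, so it has at least `k` neighbours in `G`. Since a forest has no triangles, any
`k` of them form a sibling set.
-/

lemma scomp_adj_iff_of_notMem {V : Type*} (G : SimpleGraph V) {S : Set V} {v w : V}
    (hv : v ∉ S) : (scomp G S).Adj v w ↔ G.Adj v w := by
  simp only [scomp, hv, false_and, false_or, not_false_eq_true, true_and]
  exact ⟨And.right, fun h => ⟨h.ne, h⟩⟩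

lemma siblingSet_of_subset_neighborSet {V : Type*} {G : SimpleGraph V} (hG : G.IsAcyclic)
    {S : Set V} {v : V} (hS : S ⊆ G.neighborSet v) : SiblingSet G S S.ncard := by
  classical
  refine ⟨rfl, fun a ha b hb hab => ?_, v, fun u hu => hS hu⟩
  exact hG.cliqueFree le_rfl {v, a, b} (is3Clique_triple_iff.mpr ⟨hS ha, hS hb, hab⟩)

lemma ncard_adj_inter_lt {V : Type*} (H : SimpleGraph V) {X T : Set V} (hT : T.Finite)
    (hXT : X ⊆ T) {v : V} (hv : v ∈ X) : {w | w ∈ X ∧ H.Adj v w}.ncard < T.ncard := by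
  have hsub : {w | w ∈ X ∧ H.Adj v w} ⊆ T \ {v} :=
    fun w ⟨hw, hadj⟩ => ⟨hXT hw, hadj.ne.symm⟩
  exact (Set.ncard_le_ncard hsub hT.sdiff).trans_lt
    (Set.ncard_sdiff_singleton_lt_of_mem (hXT hv) hT)

theorem stmt15_general {V : Type*} [Fintype V] (G : SimpleGraph V) (k : ℕ)
    (hforest : G.IsAcyclic)
    (hnosib : ¬ ∃ T : Set V, SiblingSet G T k) :
    ∀ T : Set V, DegeneracyExactly (scomp G T) k → k + 1 ≤ T.ncard := by
  intro T hdeg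
  by_contra! hT
  obtain ⟨X, ⟨x, hx⟩, hXcore⟩ := hdeg.2
  have hXT : ¬ X ⊆ T := fun hXT =>
    (hXcore x hx).not_gt ((ncard_adj_inter_lt _ T.toFinite hXT hx).trans_le (by omega))
  obtain ⟨v, hvX, hvT⟩ := Set.not_subset.mp hXT
  have hdeg_v : k ≤ {w | w ∈ X ∧ G.Adj v w}.ncard := by
    simpa only [scomp_adj_iff_of_notMem G hvT] using hXcore v hvX
  obtain ⟨S, hSX, rfl⟩ := Set.exists_subset_card_eq hdeg_v
  exact hnosib ⟨S, siblingSet_of_subset_neighborSet hforest fun w hw => (hSX hw).2⟩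

theorem stmt15 {V : Type*} [Fintype V] (G : SimpleGraph V) (k : ℕ) (hk : 2 ≤ k)
    (hforest : G.IsAcyclic)
    (hcard : 2 * k + 2 ≤ Fintype.card V)
    (hnosib : ¬ ∃ T : Set V, SiblingSet G T k) :
    ∀ T : Set V, DegeneracyExactly (scomp G T) k → k + 1 ≤ T.ncard :=
  stmt15_general G k hforest hnosib
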